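/- arXiv:1203.4451 — 2 statements merged into one kernel-verified Lean document; each statement's English description precedes it below -/
import Mathlib

section
/- Let (û, ŵ, v̂, ẑ) be a fixed point of the GBPDNA iteration and let (uⁿ, wⁿ, vⁿ, zⁿ)_{n≥0} be generated by the iteration from any starting point. Let L and B be invertible linear maps with LᵀL = I − KᵀK and BᵀB = I − AAᵀ. Then for every M ≥ 0 the series Σ_{n=M}^{∞} ( ‖L(u^{n+1} − uⁿ)‖² + ‖B(w^{n+1} − wⁿ)‖² + ‖ẑ − zⁿ − K(û − u^{n+1})‖² ) is bounded above by ‖L(u^M − û)‖² + ‖B(w^M − ŵ)‖² + θ⁻¹‖v^M − v̂‖² + ‖z^M − ẑ‖². -/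
/-!
Shift every iterate by the fixed point. The quantity
`‖L u‖² + ‖B w‖² + θ⁻¹ ‖v‖² + ‖z‖²` of the deviations then drops in every step by at least
the summand of the series. The `u`- and `w`-updates are proximal steps in the metrics
`‖L ·‖² = ‖·‖² - ‖K ·‖²` and `‖B ·‖² = ‖·‖² - ‖Aᵀ ·‖²`, and `P_μ`, `Q_{y,ε}` are projections
onto convex sets, hence firmly nonexpansive. The cross terms cancel, and `θ ≤ 1` absorbs what
is left over from the multiplier update. Summing the one-step inequality telescopes.
-/

open scoped RealInnerProductSpace

/-- Componentwise projection `P_λ` on `(ℝ^d)^p`. -/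
noncomputable def Pproj {d p : ℕ} (lam : ℝ)
    (w : PiLp 2 (fun _ : Fin p => EuclideanSpace ℝ (Fin d))) :
    PiLp 2 (fun _ : Fin p => EuclideanSpace ℝ (Fin d)) :=
  WithLp.toLp 2 (fun i => if lam < ‖w i‖ then (lam / ‖w i‖) • w i else w i)

/-- Projection onto the closed `ℓ₂`-ball of radius `ε` centered at `y`. -/
noncomputable def Qproj {m : ℕ} (y : EuclideanSpace ℝ (Fin m)) (eps : ℝ)
    (v : EuclideanSpace ℝ (Fin m)) : EuclideanSpace ℝ (Fin m) :=
  if eps < ‖v - y‖ then y + (eps / ‖v - y‖) • (v - y) else v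

section FirmlyNonexpansive

variable {E : Type*} [NormedAddCommGroup E] [InnerProductSpace ℝ E]

def IsFirmlyNonexpansive (P : E → E) : Prop :=
  ∀ x x', ‖P x - P x'‖ ^ 2 ≤ ⟪P x - P x', x - x'⟫

theorem isFirmlyNonexpansive_of_inner_le_zero {P : E → E} {C : Set E} (hPC : ∀ x, P x ∈ C)
    (hP : ∀ x, ∀ q ∈ C, ⟪x - P x, q - P x⟫ ≤ 0) : IsFirmlyNonexpansive P := by
  intro x x'
  have hsum := add_nonpos (hP x _ (hPC x')) (hP x' _ (hPC x))
  have hid : ⟪x - P x, P x' - P x⟫ + ⟪x' - P x', P x - P x'⟫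
      = ‖P x - P x'‖ ^ 2 - ⟪P x - P x', x - x'⟫ := by
    calc ⟪x - P x, P x' - P x⟫ + ⟪x' - P x', P x - P x'⟫
        = ⟪(x' - P x') - (x - P x), P x - P x'⟫ := by
          rw [← neg_sub (P x) (P x'), inner_neg_right, inner_sub_left (x' - P x')]; ring
      _ = ⟪(P x - P x') - (x - x'), P x - P x'⟫ := by congr 1; abel
      _ = ‖P x - P x'‖ ^ 2 - ⟪P x - P x', x - x'⟫ := by
          rw [inner_sub_left, real_inner_self_eq_norm_sq, real_inner_comm]
  linarith

theorem norm_sq_add_norm_sub_sq (x y : E) :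
    ‖x‖ ^ 2 + ‖x - y‖ ^ 2 = ‖y‖ ^ 2 + 2 * ⟪x, x - y⟫ := by
  rw [norm_sub_sq_real, inner_sub_right, real_inner_self_eq_norm_sq]; ring

end FirmlyNonexpansive

section Projections

variable {m p d : ℕ}

theorem Qproj_mem_closedBall (y : EuclideanSpace ℝ (Fin m)) {eps : ℝ} (heps : 0 ≤ eps)
    (x : EuclideanSpace ℝ (Fin m)) : Qproj y eps x ∈ Metric.closedBall y eps := by
  rw [Metric.mem_closedBall, dist_eq_norm, Qproj]
  split_ifs with h
  · have hr : 0 < ‖x - y‖ := heps.trans_lt h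
    rw [add_sub_cancel_left, norm_smul, Real.norm_of_nonneg (by positivity),
      div_mul_cancel₀ _ hr.ne']
  · exact not_lt.mp h

theorem inner_sub_Qproj_le_zero (y : EuclideanSpace ℝ (Fin m)) {eps : ℝ} (heps : 0 ≤ eps)
    (x q : EuclideanSpace ℝ (Fin m)) (hq : q ∈ Metric.closedBall y eps) :
    ⟪x - Qproj y eps x, q - Qproj y eps x⟫ ≤ 0 := by
  rw [Metric.mem_closedBall, dist_eq_norm] at hq
  unfold Qproj
  split_ifs with h
  · set r := ‖x - y‖
    have hr : 0 < r := heps.trans_lt h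
    have hx : x - (y + (eps / r) • (x - y)) = (1 - eps / r) • (x - y) := by module
    have hq' : q - (y + (eps / r) • (x - y)) = (q - y) - (eps / r) • (x - y) := by abel
    have hcs : ⟪x - y, q - y⟫ ≤ r * eps :=
      (real_inner_le_norm _ _).trans (mul_le_mul_of_nonneg_left hq hr.le)
    have hrr : eps / r * r ^ 2 = eps * r := by field_simp
    rw [hx, hq', real_inner_smul_left, inner_sub_right, real_inner_smul_right,
      real_inner_self_eq_norm_sq, hrr]
    have : eps / r < 1 := (div_lt_one hr).2 h
    exact mul_nonpos_of_nonneg_of_nonpos (by linarith) (by linarith)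
  · simp

theorem isFirmlyNonexpansive_Qproj (y : EuclideanSpace ℝ (Fin m)) {eps : ℝ} (heps : 0 ≤ eps) :
    IsFirmlyNonexpansive (Qproj y eps) :=
  isFirmlyNonexpansive_of_inner_le_zero (Qproj_mem_closedBall y heps)
    (inner_sub_Qproj_le_zero y heps)

theorem Pproj_apply (lam : ℝ) (w : PiLp 2 (fun _ : Fin p => EuclideanSpace ℝ (Fin d)))
    (i : Fin p) : Pproj lam w i = Qproj 0 lam (w i) := by
  simp [Pproj, Qproj]

theorem isFirmlyNonexpansive_Pproj {lam : ℝ} (hlam : 0 ≤ lam) :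
    IsFirmlyNonexpansive (Pproj (p := p) (d := d) lam) := by
  intro x x'
  rw [PiLp.norm_sq_eq_of_L2, PiLp.inner_apply]
  refine Finset.sum_le_sum fun i _ => ?_
  simpa only [PiLp.sub_apply, Pproj_apply] using isFirmlyNonexpansive_Qproj 0 hlam (x i) (x' i)

end Projections

section Estimates

variable {E F G : Type*}
  [NormedAddCommGroup E] [InnerProductSpace ℝ E] [CompleteSpace E]
  [NormedAddCommGroup F] [InnerProductSpace ℝ F] [CompleteSpace F]
  [NormedAddCommGroup G] [InnerProductSpace ℝ G] [CompleteSpace G]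

theorem inner_map_map_of_adjoint_comp_eq {T : E →L[ℝ] F} {S : E →L[ℝ] G}
    (h : T.adjoint.comp T = ContinuousLinearMap.id ℝ E - S.adjoint.comp S) (x y : E) :
    ⟪T x, T y⟫ = ⟪x, y⟫ - ⟪S x, S y⟫ := by
  have hy : T.adjoint (T y) = y - S.adjoint (S y) := by simpa using DFunLike.congr_fun h y
  rw [← ContinuousLinearMap.adjoint_inner_right, hy, inner_sub_right,
    ContinuousLinearMap.adjoint_inner_right]

theorem gbpdna_primal_identity {K : E →L[ℝ] F} {A : E →L[ℝ] G} {L : E →L[ℝ] E}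
    (hL : L.adjoint.comp L = ContinuousLinearMap.id ℝ E - K.adjoint.comp K)
    {a a' : E} {b' : G} {c e : F} (ha' : a' - a = -K.adjoint (c + K a - e) - A.adjoint b') :
    ‖L a'‖ ^ 2 + ‖L (a' - a)‖ ^ 2 = ‖L a‖ ^ 2 - 2 * ⟪K a', c + K a' - e⟫ - 2 * ⟪A a', b'⟫ := by
  have hinner : ⟪a', a' - a⟫ = -⟪K a', c + K a - e⟫ - ⟪A a', b'⟫ := by
    rw [ha', inner_sub_right, inner_neg_right, ContinuousLinearMap.adjoint_inner_right,
      ContinuousLinearMap.adjoint_inner_right]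
  have hshift : ⟪K a', c + K a' - e⟫ = ⟪K a', c + K a - e⟫ + ⟪K a', K (a' - a)⟫ := by
    rw [← inner_add_right, map_sub]; congr 1; abel
  have hpol := norm_sq_add_norm_sub_sq (L a') (L a)
  rw [← map_sub, inner_map_map_of_adjoint_comp_eq hL] at hpol
  linarith

theorem gbpdna_dual_estimate {A : E →L[ℝ] G} {B : G →L[ℝ] G}
    (hB : B.adjoint.comp B = ContinuousLinearMap.id ℝ G - A.comp A.adjoint)
    {a' ā : E} {b b' : G} (hā : a' - ā = A.adjoint (b - b')) (hb' : ‖b'‖ ^ 2 ≤ ⟪b', b + A ā⟫) :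
    ‖B b'‖ ^ 2 + ‖B (b' - b)‖ ^ 2 ≤ ‖B b‖ ^ 2 + 2 * ⟪A a', b'⟫ := by
  have hBA : B.adjoint.comp B = ContinuousLinearMap.id ℝ G - A.adjoint.adjoint.comp A.adjoint := by
    rwa [A.adjoint_adjoint]
  have hā' : ā = a' + A.adjoint (b' - b) := by
    rw [← neg_sub b b', map_neg, ← hā]; abel
  have hb'' : ⟪b', b + A ā⟫ = ⟪b', b⟫ + ⟪A a', b'⟫ + ⟪A.adjoint b', A.adjoint (b' - b)⟫ := by
    rw [inner_add_right, ← ContinuousLinearMap.adjoint_inner_left, hā', inner_add_right,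
      ContinuousLinearMap.adjoint_inner_left, real_inner_comm (A a') b']; ring
  have hsq : ⟪b', b' - b⟫ = ‖b'‖ ^ 2 - ⟪b', b⟫ := by
    rw [inner_sub_right, real_inner_self_eq_norm_sq]
  have hpol := norm_sq_add_norm_sub_sq (B b') (B b)
  rw [← map_sub, inner_map_map_of_adjoint_comp_eq hBA] at hpol
  linarith

end Estimates

theorem gbpdna_multiplier_estimate {F : Type*} [NormedAddCommGroup F] [InnerProductSpace ℝ F]
    {θ : ℝ} (hθ0 : 0 < θ) (hθ1 : θ ≤ 1) {s c c' e e' : F}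
    (he' : ‖e'‖ ^ 2 ≤ ⟪e', s + c⟫) (hc' : c' = c + θ • (s - e')) :
    θ⁻¹ * ‖c'‖ ^ 2 + ‖e'‖ ^ 2 + ‖s - e‖ ^ 2 ≤ θ⁻¹ * ‖c‖ ^ 2 + ‖e‖ ^ 2 + 2 * ⟪s, c + s - e⟫ := by
  have hc'sq : θ⁻¹ * ‖c'‖ ^ 2 = θ⁻¹ * ‖c‖ ^ 2 + 2 * ⟪c, s - e'⟫ + θ * ‖s - e'‖ ^ 2 := by
    rw [hc', norm_add_sq_real, real_inner_smul_right, norm_smul, Real.norm_of_nonneg hθ0.le]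
    field_simp
  have hθ : θ * ‖s - e'‖ ^ 2 ≤ ‖s - e'‖ ^ 2 := mul_le_of_le_one_left (sq_nonneg _) hθ1
  have h1 := norm_sub_sq_real s e
  have h2 := norm_sub_sq_real s e'
  simp only [inner_add_right, inner_sub_right, real_inner_self_eq_norm_sq] at he' hc'sq ⊢
  rw [real_inner_comm c s, real_inner_comm c e', real_inner_comm e' s] at *
  linarith

section Energy

variable {E F G : Type*} [NormedAddCommGroup E] [NormedSpace ℝ E] [NormedAddCommGroup F]
  [NormedAddCommGroup G] [NormedSpace ℝ G]

/-- The Lyapunov function of GBPDNA, evaluated at the deviation from a fixed point. -/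
noncomputable def gbpdnaEnergy (L : E →L[ℝ] E) (B : G →L[ℝ] G) (θ : ℝ) (u : E) (w : G)
    (v z : F) : ℝ :=
  ‖L u‖ ^ 2 + ‖B w‖ ^ 2 + θ⁻¹ * ‖v‖ ^ 2 + ‖z‖ ^ 2

theorem gbpdnaEnergy_nonneg (L : E →L[ℝ] E) (B : G →L[ℝ] G) {θ : ℝ} (hθ : 0 ≤ θ)
    (u : E) (w : G) (v z : F) : 0 ≤ gbpdnaEnergy L B θ u w v z := by
  unfold gbpdnaEnergy; positivity

end Energy

section Iteration

variable {E F G : Type*}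
  [NormedAddCommGroup E] [InnerProductSpace ℝ E] [CompleteSpace E]
  [NormedAddCommGroup F] [InnerProductSpace ℝ F] [CompleteSpace F]
  [NormedAddCommGroup G] [InnerProductSpace ℝ G] [CompleteSpace G]

theorem gbpdnaEnergy_step {K : E →L[ℝ] F} {A : E →L[ℝ] G} {L : E →L[ℝ] E} {B : G →L[ℝ] G}
    (hL : L.adjoint.comp L = ContinuousLinearMap.id ℝ E - K.adjoint.comp K)
    (hB : B.adjoint.comp B = ContinuousLinearMap.id ℝ G - A.comp A.adjoint)
    {P : G → G} {Q : F → F} (hP : IsFirmlyNonexpansive P) (hQ : IsFirmlyNonexpansive Q)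
    {θ : ℝ} (hθ0 : 0 < θ) (hθ1 : θ ≤ 1)
    {uh : E} {wh : G} {vh zh : F}
    (hfw : wh = P (wh + A uh)) (hfu : K.adjoint (vh + K uh - zh) + A.adjoint wh = 0)
    (hfz : zh = Q (K uh + vh)) (hfv : K uh = zh)
    {u u' ū' : E} {w w' : G} {v v' z z' : F}
    (hū' : ū' = u - K.adjoint (v + K u - z) - A.adjoint w) (hw' : w' = P (w + A ū'))
    (hu' : u' = u - K.adjoint (v + K u - z) - A.adjoint w') (hz' : z' = Q (K u' + v))
    (hv' : v' = v + θ • (K u' - z')) :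
    ‖L (u' - u)‖ ^ 2 + ‖B (w' - w)‖ ^ 2 + ‖zh - z - K (uh - u')‖ ^ 2
        + gbpdnaEnergy L B θ (u' - uh) (w' - wh) (v' - vh) (z' - zh)
      ≤ gbpdnaEnergy L B θ (u - uh) (w - wh) (v - vh) (z - zh) := by
  have hu'' : (u' - uh) - (u - uh)
      = -K.adjoint ((v - vh) + K (u - uh) - (z - zh)) - A.adjoint (w' - wh) := by
    simp only [map_sub, map_add] at hfu hu' ⊢
    linear_combination (norm := module) hu' - hfu
  have hū'' : (u' - uh) - (ū' - uh) = A.adjoint ((w - wh) - (w' - wh)) := by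
    rw [hu', hū']; simp only [map_sub]; abel
  have hw'' : ‖w' - wh‖ ^ 2 ≤ ⟪w' - wh, (w - wh) + A (ū' - uh)⟫ := by
    have h := hP (w + A ū') (wh + A uh)
    rwa [← hw', ← hfw, show w + A ū' - (wh + A uh) = w - wh + A (ū' - uh) by
      rw [map_sub]; abel] at h
  have hz'' : ‖z' - zh‖ ^ 2 ≤ ⟪z' - zh, K (u' - uh) + (v - vh)⟫ := by
    have h := hQ (K u' + v) (K uh + vh)
    rwa [← hz', ← hfz, show K u' + v - (K uh + vh) = K (u' - uh) + (v - vh) by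
      rw [map_sub]; abel] at h
  have hv'' : v' - vh = (v - vh) + θ • (K (u' - uh) - (z' - zh)) := by
    rw [hv', map_sub, hfv]; module
  have hprimal := gbpdna_primal_identity hL hu''
  have hdual := gbpdna_dual_estimate hB hū'' hw''
  have hmult := gbpdna_multiplier_estimate (e := z - zh) hθ0 hθ1 hz'' hv''
  rw [show (u' - uh) - (u - uh) = u' - u by abel] at hprimal
  rw [show (w' - wh) - (w - wh) = w' - w by abel] at hdual
  rw [show K (u' - uh) - (z - zh) = zh - z - K (uh - u') by simp only [map_sub]; abel] at hmult
  unfold gbpdnaEnergy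
  linarith

end Iteration

theorem sum_Ico_le_of_add_le {T V : ℕ → ℝ} (hV : ∀ n, 0 ≤ V n) (hstep : ∀ n, T n + V (n + 1) ≤ V n)
    (M N : ℕ) : ∑ n ∈ Finset.Ico M N, T n ≤ V M := by
  rcases le_or_gt M N with hMN | hNM
  · calc ∑ n ∈ Finset.Ico M N, T n ≤ ∑ n ∈ Finset.Ico M N, (V n - V (n + 1)) :=
          Finset.sum_le_sum fun n _ => by linarith [hstep n]
      _ = V M - V N := by
          rw [← neg_sub (V N), ← Finset.sum_Ico_sub V hMN, ← Finset.sum_neg_distrib]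
          simp only [neg_sub]
      _ ≤ V M := by linarith [hV N]
  · simp [Finset.Ico_eq_empty_of_le hNM.le, hV M]

theorem stmt6_general {N m p d : ℕ}
    (K : EuclideanSpace ℝ (Fin N) →L[ℝ] EuclideanSpace ℝ (Fin m))
    (A : EuclideanSpace ℝ (Fin N) →L[ℝ] PiLp 2 (fun _ : Fin p => EuclideanSpace ℝ (Fin d)))
    (y : EuclideanSpace ℝ (Fin m)) (eps : ℝ) (heps : 0 ≤ eps) (mu : ℝ) (hmu : 0 < mu)
    (θ : ℝ) (hθ0 : 0 < θ) (hθ1 : θ ≤ 1)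
    (L : EuclideanSpace ℝ (Fin N) →L[ℝ] EuclideanSpace ℝ (Fin N))
    (B : PiLp 2 (fun _ : Fin p => EuclideanSpace ℝ (Fin d)) →L[ℝ]
      PiLp 2 (fun _ : Fin p => EuclideanSpace ℝ (Fin d)))
    (hL : L.adjoint.comp L = ContinuousLinearMap.id ℝ _ - K.adjoint.comp K)
    (hB : B.adjoint.comp B = ContinuousLinearMap.id ℝ _ - A.comp A.adjoint)
    (u ubar : ℕ → EuclideanSpace ℝ (Fin N))
    (w : ℕ → PiLp 2 (fun _ : Fin p => EuclideanSpace ℝ (Fin d)))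
    (v z : ℕ → EuclideanSpace ℝ (Fin m))
    (hubar : ∀ n, ubar (n + 1) = u n - K.adjoint (v n + K (u n) - z n) - A.adjoint (w n))
    (hw : ∀ n, w (n + 1) = Pproj mu (w n + A (ubar (n + 1))))
    (hu : ∀ n, u (n + 1) = u n - K.adjoint (v n + K (u n) - z n) - A.adjoint (w (n + 1)))
    (hz : ∀ n, z (n + 1) = Qproj y eps (K (u (n + 1)) + v n))
    (hv : ∀ n, v (n + 1) = v n + θ • (K (u (n + 1)) - z (n + 1)))
    (uh : EuclideanSpace ℝ (Fin N))
    (wh : PiLp 2 (fun _ : Fin p => EuclideanSpace ℝ (Fin d)))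
    (vh zh : EuclideanSpace ℝ (Fin m))
    (hfw : wh = Pproj mu (wh + A uh))
    (hfu : K.adjoint (vh + K uh - zh) + A.adjoint wh = 0)
    (hfz : zh = Qproj y eps (K uh + vh))
    (hfv : K uh = zh)
    :
    ∀ M Nend : ℕ,
      ∑ n ∈ Finset.Ico M Nend,
          (‖L (u (n + 1) - u n)‖ ^ 2 + ‖B (w (n + 1) - w n)‖ ^ 2
            + ‖zh - z n - K (uh - u (n + 1))‖ ^ 2) ≤
        ‖L (u M - uh)‖ ^ 2 + ‖B (w M - wh)‖ ^ 2 + θ⁻¹ * ‖v M - vh‖ ^ 2 + ‖z M - zh‖ ^ 2 :=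
  sum_Ico_le_of_add_le
    (fun n => gbpdnaEnergy_nonneg L B hθ0.le (u n - uh) (w n - wh) (v n - vh) (z n - zh))
    (fun n => gbpdnaEnergy_step hL hB (isFirmlyNonexpansive_Pproj hmu.le)
      (isFirmlyNonexpansive_Qproj y heps) hθ0 hθ1 hfw hfu hfz hfv
      (hubar n) (hw n) (hu n) (hz n) (hv n))

/-- Summed descent inequality: for every `M`, all partial sums (from `M`) of the series
`Σₙ (‖L(u^{n+1}−uⁿ)‖² + ‖B(w^{n+1}−wⁿ)‖² + ‖ẑ−zⁿ−K(û−u^{n+1})‖²)` are bounded above by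
`‖L(u^M−û)‖² + ‖B(w^M−ŵ)‖² + θ⁻¹‖v^M−v̂‖² + ‖z^M−ẑ‖²`. -/
theorem stmt6 {N m p d : ℕ}
    (K : EuclideanSpace ℝ (Fin N) →L[ℝ] EuclideanSpace ℝ (Fin m))
    (A : EuclideanSpace ℝ (Fin N) →L[ℝ] PiLp 2 (fun _ : Fin p => EuclideanSpace ℝ (Fin d)))
    (hK : ‖K‖ < 1) (hA : ‖A‖ < 1)
    (y : EuclideanSpace ℝ (Fin m)) (eps : ℝ) (heps : 0 ≤ eps) (mu : ℝ) (hmu : 0 < mu)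
    (θ : ℝ) (hθ0 : 0 < θ) (hθ1 : θ ≤ 1)
    (L : EuclideanSpace ℝ (Fin N) →L[ℝ] EuclideanSpace ℝ (Fin N))
    (B : PiLp 2 (fun _ : Fin p => EuclideanSpace ℝ (Fin d)) →L[ℝ]
      PiLp 2 (fun _ : Fin p => EuclideanSpace ℝ (Fin d)))
    (hLbij : Function.Bijective L) (hBbij : Function.Bijective B)
    (hL : L.adjoint.comp L = ContinuousLinearMap.id ℝ _ - K.adjoint.comp K)
    (hB : B.adjoint.comp B = ContinuousLinearMap.id ℝ _ - A.comp A.adjoint)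
    (u ubar : ℕ → EuclideanSpace ℝ (Fin N))
    (w : ℕ → PiLp 2 (fun _ : Fin p => EuclideanSpace ℝ (Fin d)))
    (v z : ℕ → EuclideanSpace ℝ (Fin m))
    (hubar : ∀ n, ubar (n + 1) = u n - K.adjoint (v n + K (u n) - z n) - A.adjoint (w n))
    (hw : ∀ n, w (n + 1) = Pproj mu (w n + A (ubar (n + 1))))
    (hu : ∀ n, u (n + 1) = u n - K.adjoint (v n + K (u n) - z n) - A.adjoint (w (n + 1)))
    (hz : ∀ n, z (n + 1) = Qproj y eps (K (u (n + 1)) + v n))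
    (hv : ∀ n, v (n + 1) = v n + θ • (K (u (n + 1)) - z (n + 1)))
    (uh : EuclideanSpace ℝ (Fin N))
    (wh : PiLp 2 (fun _ : Fin p => EuclideanSpace ℝ (Fin d)))
    (vh zh : EuclideanSpace ℝ (Fin m))
    (hfw : wh = Pproj mu (wh + A uh))
    (hfu : K.adjoint (vh + K uh - zh) + A.adjoint wh = 0)
    (hfz : zh = Qproj y eps (K uh + vh))
    (hfv : K uh = zh)
    :
    ∀ M Nend : ℕ,
      ∑ n ∈ Finset.Ico M Nend,
          (‖L (u (n + 1) - u n)‖ ^ 2 + ‖B (w (n + 1) - w n)‖ ^ 2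
            + ‖zh - z n - K (uh - u (n + 1))‖ ^ 2) ≤
        ‖L (u M - uh)‖ ^ 2 + ‖B (w M - wh)‖ ^ 2 + θ⁻¹ * ‖v M - vh‖ ^ 2 + ‖z M - zh‖ ^ 2 :=
  stmt6_general K A y eps heps mu hmu θ hθ0 hθ1 L B hL hB u ubar w v z hubar hw hu hz hv uh wh vh zh
    hfw hfu hfz hfv
end

section
/- Assume the fixed-point system admits a solution, and let (uⁿ, wⁿ, vⁿ, zⁿ)_{n≥0} be generated by the GBPDNA iteration from any starting point. If a subsequence (u^{n_j}, w^{n_j}, v^{n_j}, z^{n_j}) converges to a point (u†, w†, v†, z†), then (u†, w†, v†, z†) is a fixed point of the iteration, i.e. it satisfies w† = P_μ(w† + Au†), Kᵀ(v† + Ku† − z†) + Aᵀw† = 0, z† = Q_{y,ε}(Ku† + v†) and Ku† = z†. -/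
/-!
Measured from a fixed point `(û, ŵ, v̂, ẑ)`, the errors obey the same update equations, except
that `P_μ` and `Q_{y,ε}` only enter through their firm nonexpansiveness relative to the fixed point.
Combining these two inequalities with the `u`-update and Young's inequality (using `θ ≤ 1`), a
nonnegative Lyapunov function decreases at every step by a positive multiple of
`‖Δu‖² + ‖Δw‖² + ‖Δv‖²` (this is where `‖K‖, ‖A‖ < 1` enter). So consecutive differences tend to
zero, the shifted subsequence `n_j + 1` has the same limit, and passing to the limit in the update
equations (the projections are continuous) gives the fixed-point equations.
-/

open scoped RealInnerProductSpace
open Filter Topology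

section FirmlyNonexpansive

variable {E : Type*} [NormedAddCommGroup E] [InnerProductSpace ℝ E]

def FirmlyNonexpansive (P : E → E) : Prop :=
  ∀ x x', 0 ≤ ⟪(x - x') - (P x - P x'), P x - P x'⟫

theorem FirmlyNonexpansive.norm_sub_le {P : E → E} (hP : FirmlyNonexpansive P) (x x' : E) :
    ‖P x - P x'‖ ≤ ‖x - x'‖ := by
  have h := hP x x'
  rw [inner_sub_left, real_inner_self_eq_norm_sq] at h
  nlinarith [real_inner_le_norm (x - x') (P x - P x'), norm_nonneg (x - x'),
    norm_nonneg (P x - P x')]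

theorem FirmlyNonexpansive.lipschitzWith {P : E → E} (hP : FirmlyNonexpansive P) :
    LipschitzWith 1 P :=
  LipschitzWith.mk_one fun x x' => by simpa only [dist_eq_norm] using hP.norm_sub_le x x'

theorem firmlyNonexpansive_of_inner_sub_nonpos {P : E → E} {S : Set E} (hPS : ∀ x, P x ∈ S)
    (hP : ∀ x, ∀ s ∈ S, ⟪x - P x, s - P x⟫ ≤ 0) : FirmlyNonexpansive P := by
  intro x x'
  have h := hP x (P x') (hPS x')
  have h' := hP x' (P x) (hPS x)
  have e : (x - x') - (P x - P x') = (x - P x) - (x' - P x') := by abel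
  have e' : P x - P x' = -(P x' - P x) := (neg_sub _ _).symm
  rw [e, inner_sub_left]
  nth_rewrite 1 [e']
  rw [inner_neg_right]
  linarith

theorem FirmlyNonexpansive.piLp {ι : Type*} [Fintype ι] {F : ι → Type*}
    [∀ i, NormedAddCommGroup (F i)] [∀ i, InnerProductSpace ℝ (F i)] {P : ∀ i, F i → F i}
    (hP : ∀ i, FirmlyNonexpansive (P i)) :
    FirmlyNonexpansive fun x : PiLp 2 F => WithLp.toLp 2 fun i => P i (x i) := by
  intro x x'
  rw [PiLp.inner_apply]
  exact Finset.sum_nonneg fun i _ => hP i (x i) (x' i)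

noncomputable def ballProj (c : E) (r : ℝ) (x : E) : E :=
  if r < ‖x - c‖ then c + (r / ‖x - c‖) • (x - c) else x

variable {r : ℝ}

theorem ballProj_mem (c : E) (hr : 0 ≤ r) (x : E) : ballProj c r x ∈ Metric.closedBall c r := by
  rw [mem_closedBall_iff_norm, ballProj]
  split_ifs with h
  · have hx : 0 < ‖x - c‖ := hr.trans_lt h
    rw [add_sub_cancel_left, norm_smul, Real.norm_of_nonneg (div_nonneg hr hx.le),
      div_mul_cancel₀ _ hx.ne']
  · exact not_lt.mp h

theorem inner_sub_ballProj_nonpos (c : E) (hr : 0 ≤ r) (x : E) {s : E}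
    (hs : s ∈ Metric.closedBall c r) : ⟪x - ballProj c r x, s - ballProj c r x⟫ ≤ 0 := by
  rw [mem_closedBall_iff_norm] at hs
  unfold ballProj
  split_ifs with h
  · have hx : 0 < ‖x - c‖ := hr.trans_lt h
    set t := r / ‖x - c‖
    have ht : 0 ≤ 1 - t := by rw [sub_nonneg, div_le_one hx]; exact h.le
    have e1 : x - (c + t • (x - c)) = (1 - t) • (x - c) := by rw [sub_smul, one_smul]; abel
    have e2 : s - (c + t • (x - c)) = (s - c) - t • (x - c) := by abel
    have hcs : ⟪x - c, s - c⟫ ≤ ‖x - c‖ * r :=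
      (real_inner_le_norm _ _).trans (mul_le_mul_of_nonneg_left hs hx.le)
    have htx : t * ‖x - c‖ ^ 2 = ‖x - c‖ * r := by simp only [t]; field_simp
    rw [e1, e2, real_inner_smul_left, inner_sub_right, real_inner_smul_right,
      real_inner_self_eq_norm_sq, htx]
    exact mul_nonpos_of_nonneg_of_nonpos ht (by linarith)
  · simp

theorem firmlyNonexpansive_ballProj (c : E) (hr : 0 ≤ r) : FirmlyNonexpansive (ballProj c r) :=
  firmlyNonexpansive_of_inner_sub_nonpos (ballProj_mem c hr) fun x _ hs =>
    inner_sub_ballProj_nonpos c hr x hs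

end FirmlyNonexpansive

theorem firmlyNonexpansive_Pproj {d p : ℕ} {mu : ℝ} (hmu : 0 ≤ mu) :
    FirmlyNonexpansive (Pproj (d := d) (p := p) mu) := by
  have h : Pproj (d := d) (p := p) mu = fun w => WithLp.toLp 2 fun i => ballProj 0 mu (w i) := by
    funext w
    simp [Pproj, ballProj]
  rw [h]
  exact FirmlyNonexpansive.piLp fun _ => firmlyNonexpansive_ballProj 0 hmu

theorem tendsto_zero_of_add_le_of_nonneg {G r : ℕ → ℝ} (hG : ∀ n, 0 ≤ G n) (hr : ∀ n, 0 ≤ r n)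
    (h : ∀ n, G (n + 1) + r n ≤ G n) : Tendsto r atTop (𝓝 0) := by
  have hsum : ∀ n, ∑ i ∈ Finset.range n, r i + G n ≤ G 0 := by
    intro n
    induction n with
    | zero => simp
    | succ n ih => rw [Finset.sum_range_succ]; linarith [h n]
  refine (summable_of_sum_range_le (c := G 0) hr fun n => ?_).tendsto_atTop_zero
  linarith [hsum n, hG n]

theorem tendsto_zero_of_mul_norm_sq_le {E : Type*} [NormedAddCommGroup E] {f : ℕ → E}
    {r : ℕ → ℝ} {c : ℝ} (hc : 0 < c) (hr : Tendsto r atTop (𝓝 0)) (h : ∀ n, c * ‖f n‖ ^ 2 ≤ r n) :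
    Tendsto f atTop (𝓝 0) := by
  have hsqrt : Tendsto (fun n => √(r n / c)) atTop (𝓝 0) := by
    simpa using (hr.div_const c).sqrt
  refine squeeze_zero_norm (fun n => ?_) hsqrt
  have hrn : 0 ≤ r n / c := div_nonneg ((mul_nonneg hc.le (sq_nonneg _)).trans (h n)) hc.le
  rw [Real.le_sqrt (norm_nonneg _) hrn, le_div_iff₀ hc, mul_comm]
  exact h n

theorem Filter.Tendsto.comp_add_one_of_tendsto_sub {G : Type*} [TopologicalSpace G]
    [AddCommGroup G] [IsTopologicalAddGroup G] {x : ℕ → G} {φ : ℕ → ℕ} {L : G}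
    (hx : Tendsto (fun j => x (φ j)) atTop (𝓝 L)) (hφ : Tendsto φ atTop atTop)
    (hdx : Tendsto (fun n => x (n + 1) - x n) atTop (𝓝 0)) :
    Tendsto (fun j => x (φ j + 1)) atTop (𝓝 L) := by
  simpa using hx.add (hdx.comp hφ)

namespace GBPDNA

section Lyapunov

variable {U M W : Type*} [NormedAddCommGroup U] [InnerProductSpace ℝ U]
  [NormedAddCommGroup M] [InnerProductSpace ℝ M] [NormedAddCommGroup W] [InnerProductSpace ℝ W]
  (K : U →L[ℝ] M) (A : U →L[ℝ] W)

theorem abs_two_mul_inner_apply_le (β : ℝ) (x : M) (a : U) :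
    |2 * β * ⟪x, K a⟫| ≤ β ^ 2 * ‖K‖ * ‖x‖ ^ 2 + ‖K‖ * ‖a‖ ^ 2 := by
  have hx : |⟪x, K a⟫| ≤ ‖K‖ * (‖x‖ * ‖a‖) :=
    calc |⟪x, K a⟫| ≤ ‖x‖ * ‖K a‖ := abs_real_inner_le_norm _ _
      _ ≤ ‖x‖ * (‖K‖ * ‖a‖) := mul_le_mul_of_nonneg_left (K.le_opNorm a) (norm_nonneg x)
      _ = ‖K‖ * (‖x‖ * ‖a‖) := by ring
  have hamgm : 2 * |β| * (‖x‖ * ‖a‖) ≤ β ^ 2 * ‖x‖ ^ 2 + ‖a‖ ^ 2 := by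
    nlinarith [sq_nonneg (|β| * ‖x‖ - ‖a‖), sq_abs β]
  rw [abs_mul, abs_mul, abs_two]
  calc 2 * |β| * |⟪x, K a⟫| ≤ 2 * |β| * (‖K‖ * (‖x‖ * ‖a‖)) := by gcongr
    _ = ‖K‖ * (2 * |β| * (‖x‖ * ‖a‖)) := by ring
    _ ≤ ‖K‖ * (β ^ 2 * ‖x‖ ^ 2 + ‖a‖ ^ 2) := by gcongr
    _ = β ^ 2 * ‖K‖ * ‖x‖ ^ 2 + ‖K‖ * ‖a‖ ^ 2 := by ring

variable {K} in
theorem multiplier_estimate (β : ℝ) {a' : U} {c c' : M}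
    (h : 0 ≤ ⟪c + β • (c' - c), K a' - β • (c' - c)⟫) :
    β * (‖c'‖ ^ 2 - ‖c‖ ^ 2) + (2 * β ^ 2 - β) * ‖c' - c‖ ^ 2 - 2 * β * ⟪c' - c, K a'⟫
      ≤ 2 * ⟪c, K a'⟫ := by
  have hexp : ⟪c + β • (c' - c), K a' - β • (c' - c)⟫
      = ⟪c, K a'⟫ + β * ⟪c' - c, K a'⟫ - β * ⟪c, c' - c⟫ - β ^ 2 * ‖c' - c‖ ^ 2 := by
    simp only [inner_add_left, inner_sub_right, real_inner_smul_left, real_inner_smul_right,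
      real_inner_self_eq_norm_sq, norm_smul, mul_pow, Real.norm_eq_abs, sq_abs]
    ring
  have hc : 2 * ⟪c, c' - c⟫ = ‖c'‖ ^ 2 - ‖c‖ ^ 2 - ‖c' - c‖ ^ 2 := by
    rw [inner_sub_right, real_inner_self_eq_norm_sq, norm_sub_sq_real, real_inner_comm]
    ring
  have hβc : 2 * β * ⟪c, c' - c⟫ = β * (‖c'‖ ^ 2 - ‖c‖ ^ 2 - ‖c' - c‖ ^ 2) := by
    rw [← hc]; ring
  linarith

variable [CompleteSpace U] [CompleteSpace W]

/-- Evaluated at the errors `a = u - û`, `b = w - ŵ`, `c = v - v̂`, the last increment `dc` of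
`v` and `β = θ⁻¹`, this is the quantity that the iteration decreases. -/
noncomputable def lyapunov (β : ℝ) (a : U) (b : W) (c dc : M) : ℝ :=
  ‖a‖ ^ 2 + (‖b‖ ^ 2 - ‖A.adjoint b‖ ^ 2) + β * ‖c‖ ^ 2 - 2 * β * ⟪dc, K a⟫
    + β ^ 2 * ‖K‖ * ‖dc‖ ^ 2

theorem norm_adjoint_apply_le (b : W) : ‖A.adjoint b‖ ≤ ‖A‖ * ‖b‖ := by
  simpa only [LinearIsometryEquiv.norm_map] using A.adjoint.le_opNorm b

theorem lyapunov_nonneg (hK : ‖K‖ ≤ 1) (hA : ‖A‖ ≤ 1) {β : ℝ} (hβ : 0 ≤ β) (a : U) (b : W)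
    (c dc : M) : 0 ≤ lyapunov K A β a b c dc := by
  have hb : ‖A.adjoint b‖ ^ 2 ≤ ‖b‖ ^ 2 := by
    gcongr
    exact (norm_adjoint_apply_le A b).trans (mul_le_of_le_one_left (norm_nonneg b) hA)
  have hcross := (abs_le.mp (abs_two_mul_inner_apply_le K β dc a)).2
  have ha : ‖K‖ * ‖a‖ ^ 2 ≤ ‖a‖ ^ 2 := mul_le_of_le_one_left (sq_nonneg _) hK
  have hc : 0 ≤ β * ‖c‖ ^ 2 := by positivity
  unfold lyapunov
  linarith

variable {K A}

theorem dual_estimate {a' : U} {b b' : W} (h : 0 ≤ ⟪(b + A (a' + A.adjoint (b' - b))) - b', b'⟫) :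
    (‖b'‖ ^ 2 - ‖A.adjoint b'‖ ^ 2) - (‖b‖ ^ 2 - ‖A.adjoint b‖ ^ 2) + (1 - ‖A‖ ^ 2) * ‖b' - b‖ ^ 2
      ≤ 2 * ⟪b', A a'⟫ := by
  have hexp : ⟪(b + A (a' + A.adjoint (b' - b))) - b', b'⟫
      = ⟪b', A a'⟫ + ⟪b', b⟫ - ‖b'‖ ^ 2 + ‖A.adjoint b'‖ ^ 2 - ⟪A.adjoint b', A.adjoint b⟫ := by
    have hAA : ∀ x, ⟪A (A.adjoint x), b'⟫ = ⟪A.adjoint b', A.adjoint x⟫ := fun x => by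
      rw [real_inner_comm, ContinuousLinearMap.adjoint_inner_left]
    simp only [map_add, map_sub, inner_add_left, inner_sub_left, hAA, real_inner_self_eq_norm_sq]
    rw [real_inner_comm (A a'), real_inner_comm b]
    ring
  have hb := norm_sub_sq_real b' b
  have hAb := norm_sub_sq_real (A.adjoint b') (A.adjoint b)
  have hAdiff : ‖A.adjoint b' - A.adjoint b‖ ^ 2 ≤ ‖A‖ ^ 2 * ‖b' - b‖ ^ 2 := by
    rw [← map_sub, ← mul_pow]
    gcongr
    exact norm_adjoint_apply_le A _
  linarith

variable [CompleteSpace M]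

/- Sum of the identity `2⟪a - a', a'⟫ = ‖a‖² - ‖a'‖² - ‖a' - a‖²` for the `u`-update, the two
projection estimates and Young's inequality for `⟪dc, K (a' - a)⟫`; `β ≥ 1` absorbs the leftover
`β ‖c' - c‖²`. -/
theorem lyapunov_step {β : ℝ} (hβ : 1 ≤ β) {a a' ub : U} {b b' : W} {c dc c' : M}
    (h_primal : a' = a - K.adjoint (c + β • dc) - A.adjoint b')
    (h_bar : ub = a - K.adjoint (c + β • dc) - A.adjoint b)
    (h_dual : 0 ≤ ⟪(b + A ub) - b', b'⟫)
    (h_mult : 0 ≤ ⟪c + β • (c' - c), K a' - β • (c' - c)⟫) :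
    lyapunov K A β a' b' c' (c' - c) + (1 - ‖K‖) * ‖a' - a‖ ^ 2 + (1 - ‖A‖ ^ 2) * ‖b' - b‖ ^ 2
        + β ^ 2 * (1 - ‖K‖) * ‖c' - c‖ ^ 2
      ≤ lyapunov K A β a b c dc := by
  have hub : ub = a' + A.adjoint (b' - b) := by rw [h_primal, h_bar, map_sub]; abel
  have hprimal : 2 * ⟪a - a', a'⟫
      = 2 * ⟪c, K a'⟫ + 2 * β * ⟪dc, K a⟫ + 2 * β * ⟪dc, K (a' - a)⟫ + 2 * ⟪b', A a'⟫ := by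
    have e : a - a' = K.adjoint (c + β • dc) + A.adjoint b' := by rw [h_primal]; abel
    rw [e, inner_add_left, ContinuousLinearMap.adjoint_inner_left,
      ContinuousLinearMap.adjoint_inner_left, map_sub]
    simp only [inner_add_left, inner_sub_right, real_inner_smul_left]
    ring
  have hnorm : 2 * ⟪a - a', a'⟫ = ‖a‖ ^ 2 - ‖a'‖ ^ 2 - ‖a' - a‖ ^ 2 := by
    rw [norm_sub_rev, norm_sub_sq_real, inner_sub_left, real_inner_self_eq_norm_sq,
      real_inner_comm]
    ring
  have hdual := dual_estimate (hub ▸ h_dual)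
  have hmult := multiplier_estimate β h_mult
  have hyoung := (abs_le.mp (abs_two_mul_inner_apply_le K β dc (a' - a))).1
  have hβsq : β * ‖c' - c‖ ^ 2 ≤ β ^ 2 * ‖c' - c‖ ^ 2 := by
    gcongr
    nlinarith
  unfold lyapunov
  linarith

end Lyapunov

variable {U M W : Type*} [NormedAddCommGroup U] [InnerProductSpace ℝ U] [CompleteSpace U]
  [NormedAddCommGroup M] [InnerProductSpace ℝ M] [CompleteSpace M]
  [NormedAddCommGroup W] [InnerProductSpace ℝ W] [CompleteSpace W]

structure IsIteration (K : U →L[ℝ] M) (A : U →L[ℝ] W) (P : W → W) (Q : M → M) (θ : ℝ)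
    (u ubar : ℕ → U) (w : ℕ → W) (v z : ℕ → M) : Prop where
  ubar_succ : ∀ n, ubar (n + 1) = u n - K.adjoint (v n + K (u n) - z n) - A.adjoint (w n)
  w_succ : ∀ n, w (n + 1) = P (w n + A (ubar (n + 1)))
  u_succ : ∀ n, u (n + 1) = u n - K.adjoint (v n + K (u n) - z n) - A.adjoint (w (n + 1))
  z_succ : ∀ n, z (n + 1) = Q (K (u (n + 1)) + v n)
  v_succ : ∀ n, v (n + 1) = v n + θ • (K (u (n + 1)) - z (n + 1))

structure IsFixedPoint (K : U →L[ℝ] M) (A : U →L[ℝ] W) (P : W → W) (Q : M → M)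
    (uh : U) (wh : W) (vh zh : M) : Prop where
  w_eq : wh = P (wh + A uh)
  adjoint_add_adjoint : K.adjoint (vh + K uh - zh) + A.adjoint wh = 0
  z_eq : zh = Q (K uh + vh)
  apply_eq : K uh = zh

namespace IsIteration

variable {K : U →L[ℝ] M} {A : U →L[ℝ] W} {P : W → W} {Q : M → M} {θ : ℝ}
  {u ubar : ℕ → U} {w : ℕ → W} {v z : ℕ → M} {uh : U} {wh : W} {vh zh : M}

theorem apply_sub_eq (hs : IsIteration K A P Q θ u ubar w v z) (hθ : θ ≠ 0) (n : ℕ) :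
    K (u (n + 1)) - z (n + 1) = θ⁻¹ • (v (n + 1) - v n) := by
  rw [hs.v_succ n, add_sub_cancel_left, inv_smul_smul₀ hθ]

theorem adjoint_apply_eq (hs : IsIteration K A P Q θ u ubar w v z)
    (hf : IsFixedPoint K A P Q uh wh vh zh) (hθ : θ ≠ 0) (n : ℕ) :
    K.adjoint (v (n + 1) + K (u (n + 1)) - z (n + 1))
      = K.adjoint ((v (n + 1) - vh) + θ⁻¹ • (v (n + 1) - v n)) - A.adjoint wh := by
  have hvh : K.adjoint vh = -A.adjoint wh := by
    simpa [hf.apply_eq] using eq_neg_of_add_eq_zero_left hf.adjoint_add_adjoint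
  rw [add_sub_assoc, hs.apply_sub_eq hθ, map_add, map_add, map_sub, hvh]
  abel

theorem u_succ_sub (hs : IsIteration K A P Q θ u ubar w v z)
    (hf : IsFixedPoint K A P Q uh wh vh zh) (hθ : θ ≠ 0) (n : ℕ) :
    u (n + 2) - uh = (u (n + 1) - uh)
      - K.adjoint ((v (n + 1) - vh) + θ⁻¹ • (v (n + 1) - v n)) - A.adjoint (w (n + 2) - wh) := by
  rw [hs.u_succ (n + 1), hs.adjoint_apply_eq hf hθ, map_sub]
  abel

theorem ubar_succ_sub (hs : IsIteration K A P Q θ u ubar w v z)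
    (hf : IsFixedPoint K A P Q uh wh vh zh) (hθ : θ ≠ 0) (n : ℕ) :
    ubar (n + 2) - uh = (u (n + 1) - uh)
      - K.adjoint ((v (n + 1) - vh) + θ⁻¹ • (v (n + 1) - v n)) - A.adjoint (w (n + 1) - wh) := by
  rw [hs.ubar_succ (n + 1), hs.adjoint_apply_eq hf hθ, map_sub]
  abel

theorem inner_w_succ_nonneg (hs : IsIteration K A P Q θ u ubar w v z)
    (hf : IsFixedPoint K A P Q uh wh vh zh) (hP : FirmlyNonexpansive P) (n : ℕ) :
    0 ≤ ⟪((w (n + 1) - wh) + A (ubar (n + 2) - uh)) - (w (n + 2) - wh), w (n + 2) - wh⟫ := by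
  have hw : w (n + 2) = P (w (n + 1) + A (ubar (n + 2))) := hs.w_succ (n + 1)
  have h := hP (w (n + 1) + A (ubar (n + 2))) (wh + A uh)
  rw [← hw, ← hf.w_eq] at h
  convert h using 2
  rw [map_sub]
  abel

theorem inner_z_succ_nonneg (hs : IsIteration K A P Q θ u ubar w v z)
    (hf : IsFixedPoint K A P Q uh wh vh zh) (hQ : FirmlyNonexpansive Q) (hθ : θ ≠ 0) (n : ℕ) :
    0 ≤ ⟪(v (n + 1) - vh) + θ⁻¹ • ((v (n + 2) - vh) - (v (n + 1) - vh)),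
      K (u (n + 2) - uh) - θ⁻¹ • ((v (n + 2) - vh) - (v (n + 1) - vh))⟫ := by
  have hz : z (n + 2) = Q (K (u (n + 2)) + v (n + 1)) := hs.z_succ (n + 1)
  have hKz : K (u (n + 2)) - z (n + 2) = θ⁻¹ • (v (n + 2) - v (n + 1)) := hs.apply_sub_eq hθ (n + 1)
  have h := hQ (K (u (n + 2)) + v (n + 1)) (K uh + vh)
  rw [← hz, ← hf.z_eq, hf.apply_eq] at h
  rw [sub_sub_sub_cancel_right, ← hKz, map_sub, hf.apply_eq]
  convert h using 2 <;> abel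

theorem lyapunov_succ_add_le (hs : IsIteration K A P Q θ u ubar w v z)
    (hf : IsFixedPoint K A P Q uh wh vh zh) (hθ0 : 0 < θ) (hθ1 : θ ≤ 1)
    (hP : FirmlyNonexpansive P) (hQ : FirmlyNonexpansive Q) (n : ℕ) :
    lyapunov K A θ⁻¹ (u (n + 2) - uh) (w (n + 2) - wh) (v (n + 2) - vh) (v (n + 2) - v (n + 1))
        + ((1 - ‖K‖) * ‖u (n + 2) - u (n + 1)‖ ^ 2 + (1 - ‖A‖ ^ 2) * ‖w (n + 2) - w (n + 1)‖ ^ 2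
          + θ⁻¹ ^ 2 * (1 - ‖K‖) * ‖v (n + 2) - v (n + 1)‖ ^ 2)
      ≤ lyapunov K A θ⁻¹ (u (n + 1) - uh) (w (n + 1) - wh) (v (n + 1) - vh) (v (n + 1) - v n) := by
  have h := lyapunov_step (one_le_inv₀ hθ0 |>.mpr hθ1) (hs.u_succ_sub hf hθ0.ne' n)
    (hs.ubar_succ_sub hf hθ0.ne' n) (hs.inner_w_succ_nonneg hf hP n)
    (hs.inner_z_succ_nonneg hf hQ hθ0.ne' n)
  simp only [sub_sub_sub_cancel_right] at h
  linarith

theorem tendsto_succ_sub_nhds_zero (hs : IsIteration K A P Q θ u ubar w v z)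
    (hf : IsFixedPoint K A P Q uh wh vh zh) (hK : ‖K‖ < 1) (hA : ‖A‖ < 1) (hθ0 : 0 < θ)
    (hθ1 : θ ≤ 1) (hP : FirmlyNonexpansive P) (hQ : FirmlyNonexpansive Q) :
    Tendsto (fun n => u (n + 1) - u n) atTop (𝓝 0) ∧
      Tendsto (fun n => w (n + 1) - w n) atTop (𝓝 0) ∧
      Tendsto (fun n => v (n + 1) - v n) atTop (𝓝 0) := by
  have hcu : 0 < 1 - ‖K‖ := sub_pos.mpr hK
  have hcw : 0 < 1 - ‖A‖ ^ 2 := sub_pos.mpr (pow_lt_one₀ (norm_nonneg A) hA two_ne_zero)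
  have hcv : 0 < θ⁻¹ ^ 2 * (1 - ‖K‖) := by positivity
  have hru := fun n => mul_nonneg hcu.le (sq_nonneg ‖u (n + 2) - u (n + 1)‖)
  have hrw := fun n => mul_nonneg hcw.le (sq_nonneg ‖w (n + 2) - w (n + 1)‖)
  have hrv := fun n => mul_nonneg hcv.le (sq_nonneg ‖v (n + 2) - v (n + 1)‖)
  have hr := tendsto_zero_of_add_le_of_nonneg
    (G := fun n => lyapunov K A θ⁻¹ (u (n + 1) - uh) (w (n + 1) - wh) (v (n + 1) - vh)
      (v (n + 1) - v n))
    (r := fun n => (1 - ‖K‖) * ‖u (n + 2) - u (n + 1)‖ ^ 2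
      + (1 - ‖A‖ ^ 2) * ‖w (n + 2) - w (n + 1)‖ ^ 2
      + θ⁻¹ ^ 2 * (1 - ‖K‖) * ‖v (n + 2) - v (n + 1)‖ ^ 2)
    (fun n => lyapunov_nonneg K A hK.le hA.le (inv_nonneg.mpr hθ0.le) _ _ _ _)
    (fun n => add_nonneg (add_nonneg (hru n) (hrw n)) (hrv n))
    (hs.lyapunov_succ_add_le hf hθ0 hθ1 hP hQ)
  refine ⟨?_, ?_, ?_⟩ <;> refine (tendsto_add_atTop_iff_nat 1).mp ?_
  · exact tendsto_zero_of_mul_norm_sq_le hcu hr fun n => by linarith [hrw n, hrv n]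
  · exact tendsto_zero_of_mul_norm_sq_le hcw hr fun n => by linarith [hru n, hrv n]
  · exact tendsto_zero_of_mul_norm_sq_le hcv hr fun n => by linarith [hru n, hrw n]

theorem isFixedPoint_of_tendsto (hs : IsIteration K A P Q θ u ubar w v z) (hθ : θ ≠ 0)
    (hP : Continuous P) (hQ : Continuous Q)
    (hdu : Tendsto (fun n => u (n + 1) - u n) atTop (𝓝 0))
    (hdw : Tendsto (fun n => w (n + 1) - w n) atTop (𝓝 0))
    (hdv : Tendsto (fun n => v (n + 1) - v n) atTop (𝓝 0))
    {φ : ℕ → ℕ} (hφ : Tendsto φ atTop atTop) {ud : U} {wd : W} {vd zd : M}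
    (hulim : Tendsto (fun j => u (φ j)) atTop (𝓝 ud))
    (hwlim : Tendsto (fun j => w (φ j)) atTop (𝓝 wd))
    (hvlim : Tendsto (fun j => v (φ j)) atTop (𝓝 vd))
    (hzlim : Tendsto (fun j => z (φ j)) atTop (𝓝 zd)) :
    IsFixedPoint K A P Q ud wd vd zd := by
  have hu1 := hulim.comp_add_one_of_tendsto_sub hφ hdu
  have hw1 := hwlim.comp_add_one_of_tendsto_sub hφ hdw
  have hKu := (K.continuous.tendsto ud).comp hulim
  have hKu1 := (K.continuous.tendsto ud).comp hu1
  -- `K uⁿ⁺¹ - zⁿ⁺¹ = θ⁻¹ (vⁿ⁺¹ - vⁿ)`, so `z` follows `K u` along any subsequence.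
  have hres : Tendsto (fun n => K (u n) - z n) atTop (𝓝 0) := by
    rw [← tendsto_add_atTop_iff_nat 1]
    simpa only [hs.apply_sub_eq hθ, smul_zero] using hdv.const_smul θ⁻¹
  have happly : K ud = zd :=
    sub_eq_zero.mp (tendsto_nhds_unique (hKu.sub hzlim) (hres.comp hφ))
  have hz1 : Tendsto (fun j => z (φ j + 1)) atTop (𝓝 zd) := by
    simpa [happly] using hKu1.sub ((hres.comp (tendsto_add_atTop_nat 1)).comp hφ)
  have hgrad : Tendsto (fun j => K.adjoint (v (φ j) + K (u (φ j)) - z (φ j))) atTop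
      (𝓝 (K.adjoint (vd + K ud - zd))) :=
    (K.adjoint.continuous.tendsto _).comp ((hvlim.add hKu).sub hzlim)
  have hadj : K.adjoint (vd + K ud - zd) + A.adjoint wd = 0 := by
    have h := (hulim.sub hgrad).sub ((A.adjoint.continuous.tendsto wd).comp hw1)
    have h' := tendsto_nhds_unique hu1 (h.congr fun j => (hs.u_succ (φ j)).symm)
    rw [sub_sub] at h'
    exact sub_eq_self.mp h'.symm
  have hubar1 : Tendsto (fun j => ubar (φ j + 1)) atTop (𝓝 ud) := by
    have h := (hulim.sub hgrad).sub ((A.adjoint.continuous.tendsto wd).comp hwlim)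
    rw [sub_sub, hadj, sub_zero] at h
    exact h.congr fun j => (hs.ubar_succ (φ j)).symm
  refine ⟨?_, hadj, ?_, happly⟩
  · have h := (hP.tendsto _).comp (hwlim.add ((A.continuous.tendsto ud).comp hubar1))
    exact tendsto_nhds_unique hw1 (h.congr fun j => (hs.w_succ (φ j)).symm)
  · have h := (hQ.tendsto _).comp (hKu1.add hvlim)
    exact tendsto_nhds_unique hz1 (h.congr fun j => (hs.z_succ (φ j)).symm)

end IsIteration

end GBPDNA

/-- If the fixed-point system admits a solution and a subsequence of the GBPDNA iterates
converges to `(u†, w†, v†, z†)`, then `(u†, w†, v†, z†)` is a fixed point of the iteration. -/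
theorem stmt9 {N m p d : ℕ}
    (K : EuclideanSpace ℝ (Fin N) →L[ℝ] EuclideanSpace ℝ (Fin m))
    (A : EuclideanSpace ℝ (Fin N) →L[ℝ] PiLp 2 (fun _ : Fin p => EuclideanSpace ℝ (Fin d)))
    (hK : ‖K‖ < 1) (hA : ‖A‖ < 1)
    (y : EuclideanSpace ℝ (Fin m)) (eps : ℝ) (heps : 0 ≤ eps) (mu : ℝ) (hmu : 0 < mu)
    (θ : ℝ) (hθ0 : 0 < θ) (hθ1 : θ ≤ 1)
    (u ubar : ℕ → EuclideanSpace ℝ (Fin N))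
    (w : ℕ → PiLp 2 (fun _ : Fin p => EuclideanSpace ℝ (Fin d)))
    (v z : ℕ → EuclideanSpace ℝ (Fin m))
    (hubar : ∀ n, ubar (n + 1) = u n - K.adjoint (v n + K (u n) - z n) - A.adjoint (w n))
    (hw : ∀ n, w (n + 1) = Pproj mu (w n + A (ubar (n + 1))))
    (hu : ∀ n, u (n + 1) = u n - K.adjoint (v n + K (u n) - z n) - A.adjoint (w (n + 1)))
    (hz : ∀ n, z (n + 1) = Qproj y eps (K (u (n + 1)) + v n))
    (hv : ∀ n, v (n + 1) = v n + θ • (K (u (n + 1)) - z (n + 1)))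
    (uh : EuclideanSpace ℝ (Fin N))
    (wh : PiLp 2 (fun _ : Fin p => EuclideanSpace ℝ (Fin d)))
    (vh zh : EuclideanSpace ℝ (Fin m))
    (hfw : wh = Pproj mu (wh + A uh))
    (hfu : K.adjoint (vh + K uh - zh) + A.adjoint wh = 0)
    (hfz : zh = Qproj y eps (K uh + vh))
    (hfv : K uh = zh)
    (φ : ℕ → ℕ) (hφ : StrictMono φ)
    (ud : EuclideanSpace ℝ (Fin N))
    (wd : PiLp 2 (fun _ : Fin p => EuclideanSpace ℝ (Fin d)))
    (vd zd : EuclideanSpace ℝ (Fin m))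
    (hulim : Tendsto (fun j => u (φ j)) atTop (𝓝 ud))
    (hwlim : Tendsto (fun j => w (φ j)) atTop (𝓝 wd))
    (hvlim : Tendsto (fun j => v (φ j)) atTop (𝓝 vd))
    (hzlim : Tendsto (fun j => z (φ j)) atTop (𝓝 zd)) :
    wd = Pproj mu (wd + A ud) ∧
      K.adjoint (vd + K ud - zd) + A.adjoint wd = 0 ∧
      zd = Qproj y eps (K ud + vd) ∧
      K ud = zd := by
  have hs : GBPDNA.IsIteration K A (Pproj mu) (Qproj y eps) θ u ubar w v z :=
    ⟨hubar, hw, hu, hz, hv⟩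
  have hf : GBPDNA.IsFixedPoint K A (Pproj mu) (Qproj y eps) uh wh vh zh :=
    ⟨hfw, hfu, hfz, hfv⟩
  have hP := firmlyNonexpansive_Pproj (d := d) (p := p) hmu.le
  have hQ : FirmlyNonexpansive (Qproj y eps) := firmlyNonexpansive_ballProj y heps
  obtain ⟨hdu, hdw, hdv⟩ := hs.tendsto_succ_sub_nhds_zero hf hK hA hθ0 hθ1 hP hQ
  have hlim := hs.isFixedPoint_of_tendsto hθ0.ne' hP.lipschitzWith.continuous
    hQ.lipschitzWith.continuous hdu hdw hdv hφ.tendsto_atTop hulim hwlim hvlim hzlim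
  exact ⟨hlim.w_eq, hlim.adjoint_add_adjoint, hlim.z_eq, hlim.apply_eq⟩
end
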